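/- Suppose Q : ℝⁿ → Matrix (Fin m) (Fin m) ℝ is a conservative Q-matrix field admitting a family of invariant distributions μ^x, uniformly exponentially ergodic with constants C₀, λ, and let F : ℝⁿ × Fin m → ℝⁿ satisfy the central condition. Then for every x the function Φ(x,i) := ∫₀^∞ (P^x_t F(x,·))(i) dt (componentwise Bochner integral) is well defined (the integrand is integrable on [0,∞)), it solves the Poisson equation −(Q(x) Φ(x,·))(i) = F(x,i) for every i ∈ Fin m (componentwise), and there is a constant C > 0 depending only on C₀ and λ with ‖Φ(x,·)‖_∞ ≤ C ‖F(x,·)‖_∞ for all x. -/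

import Mathlib

/-!
By the central condition, `(P_t F)(i) = ∑ⱼ (p_ij(t) - μ_j) F(j)`, so uniform exponential ergodicity
gives `‖(P_t F)(i)‖ ≤ C₀ e^{-λt} ‖F‖_∞`. Hence `t ↦ P_t F` is integrable on `[0, ∞)`, with integral
bounded by `(C₀ / λ) ‖F‖_∞`, and tends to `0`. Since `d/dt P_t F = Q P_t F`, integrating gives
`Q Φ = lim_{t → ∞} P_t F - P_0 F = -F`.
-/

open MeasureTheory

noncomputable section

/-- Solution candidate `Φ(x,i) := ∫₀^∞ (P^x_t F(x,·))(i) dt` of the Poisson equation,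
defined by componentwise Bochner integration. -/
def poissonSol {n m : ℕ} (Q : EuclideanSpace ℝ (Fin n) → Matrix (Fin m) (Fin m) ℝ)
    (F : EuclideanSpace ℝ (Fin n) → Fin m → EuclideanSpace ℝ (Fin n))
    (x : EuclideanSpace ℝ (Fin n)) (i : Fin m) : EuclideanSpace ℝ (Fin n) :=
  WithLp.toLp 2 (fun l => ∫ t in Set.Ici (0:ℝ), (NormedSpace.exp (t • Q x)).mulVec (fun j => F x j l) i)

open Filter Set Real Topology

theorem integrableOn_exp_decay_Ici {lam : ℝ} (hlam : 0 < lam) (C₀ S : ℝ) :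
    IntegrableOn (fun t => C₀ * exp (-lam * t) * S) (Ici 0) :=
  (integrableOn_Ici_iff_integrableOn_Ioi).2
    (((integrableOn_exp_mul_Ioi (neg_lt_zero.2 hlam) 0).const_mul C₀).mul_const S)

namespace Matrix

variable {ι E : Type*} [Fintype ι] [DecidableEq ι] [NormedAddCommGroup E] [NormedSpace ℝ E]

/-- `(P_t f)(i)` for the semigroup `P_t = exp (t • M)`, acting on `E`-valued functions. -/
def semigroupAct (M : Matrix ι ι ℝ) (t : ℝ) (f : ι → E) (i : ι) : E :=
  ∑ j, NormedSpace.exp (t • M) i j • f j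

variable (M : Matrix ι ι ℝ)

theorem semigroupAct_real (t : ℝ) (v : ι → ℝ) (i : ι) :
    M.semigroupAct t v i = (NormedSpace.exp (t • M) *ᵥ v) i := by
  simp [semigroupAct, mulVec, dotProduct]

theorem semigroupAct_zero (f : ι → E) (i : ι) : M.semigroupAct 0 f i = f i := by
  simp [semigroupAct, one_apply]

theorem map_semigroupAct {F : Type*} [NormedAddCommGroup F] [NormedSpace ℝ F]
    (L : E →L[ℝ] F) (t : ℝ) (f : ι → E) (i : ι) :
    L (M.semigroupAct t f i) = M.semigroupAct t (L ∘ f) i := by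
  simp [semigroupAct]

-- `NormedSpace.exp` is defined without a norm, so any normed algebra structure will do here.
attribute [local instance] Matrix.linftyOpNormedRing Matrix.linftyOpNormedAlgebra in
theorem hasDerivAt_semigroupAct (f : ι → E) (i : ι) (t : ℝ) :
    HasDerivAt (fun s => M.semigroupAct s f i) (∑ k, M i k • M.semigroupAct t f k) t := by
  let row : Matrix ι ι ℝ →ₗ[ℝ] E :=
    { toFun := fun A => ∑ j, A i j • f j
      map_add' := fun A B => by simp [add_smul, Finset.sum_add_distrib]
      map_smul' := fun c A => by simp [Finset.smul_sum, mul_smul] }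
  refine ((row.toContinuousLinearMap.hasFDerivAt (x := NormedSpace.exp (t • M))).comp_hasDerivAt
    t (hasDerivAt_exp_smul_const' (𝕂 := ℝ) M t)).congr_deriv ?_
  show ∑ j, (M * NormedSpace.exp (t • M)) i j • f j = _
  simp only [semigroupAct, mul_apply, Finset.sum_smul, Finset.smul_sum, mul_smul]
  exact Finset.sum_comm

theorem continuous_semigroupAct (f : ι → E) (i : ι) : Continuous fun t => M.semigroupAct t f i :=
  continuous_iff_continuousAt.2 fun t => (M.hasDerivAt_semigroupAct f i t).continuousAt

def IsExpErgodic (μ : ι → ℝ) (C₀ lam : ℝ) : Prop :=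
  ∀ i t, 0 ≤ t → ∑ j, |NormedSpace.exp (t • M) i j - μ j| ≤ C₀ * exp (-lam * t)

section Ergodic

variable {M} {μ : ι → ℝ} {C₀ lam : ℝ} {f : ι → E}

theorem norm_semigroupAct_le (hcent : ∑ j, μ j • f j = 0) (herg : M.IsExpErgodic μ C₀ lam)
    (i : ι) {t : ℝ} (ht : 0 ≤ t) :
    ‖M.semigroupAct t f i‖ ≤ C₀ * exp (-lam * t) * ⨆ j, ‖f j‖ := by
  have hcentered : M.semigroupAct t f i = ∑ j, (NormedSpace.exp (t • M) i j - μ j) • f j := by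
    simp only [semigroupAct, sub_smul, Finset.sum_sub_distrib, hcent, sub_zero]
  have hsup : ∀ j, ‖f j‖ ≤ ⨆ j, ‖f j‖ := le_ciSup (Set.finite_range _).bddAbove
  calc ‖M.semigroupAct t f i‖
      ≤ ∑ j, |NormedSpace.exp (t • M) i j - μ j| * ‖f j‖ := by
        rw [hcentered]
        refine (norm_sum_le _ _).trans_eq ?_
        simp only [norm_smul, Real.norm_eq_abs]
    _ ≤ ∑ j, |NormedSpace.exp (t • M) i j - μ j| * ⨆ j, ‖f j‖ := by gcongr; exact hsup _
    _ = (∑ j, |NormedSpace.exp (t • M) i j - μ j|) * ⨆ j, ‖f j‖ := (Finset.sum_mul ..).symm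
    _ ≤ C₀ * exp (-lam * t) * ⨆ j, ‖f j‖ := by
        gcongr
        · exact Real.iSup_nonneg fun j => norm_nonneg _
        · exact herg i t ht

theorem integrableOn_semigroupAct (hlam : 0 < lam) (hcent : ∑ j, μ j • f j = 0)
    (herg : M.IsExpErgodic μ C₀ lam) (i : ι) :
    IntegrableOn (fun t => M.semigroupAct t f i) (Ici 0) :=
  Integrable.mono' (integrableOn_exp_decay_Ici hlam _ _)
    (M.continuous_semigroupAct f i).aestronglyMeasurable.restrict
    (ae_restrict_of_forall_mem measurableSet_Ici fun _ ht => norm_semigroupAct_le hcent herg i ht)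

theorem tendsto_semigroupAct_atTop (hlam : 0 < lam) (hcent : ∑ j, μ j • f j = 0)
    (herg : M.IsExpErgodic μ C₀ lam) (i : ι) :
    Tendsto (fun t => M.semigroupAct t f i) atTop (𝓝 0) := by
  refine squeeze_zero_norm'
    ((eventually_ge_atTop 0).mono fun t ht => norm_semigroupAct_le hcent herg i ht) ?_
  have hexp : Tendsto (fun t => exp (-lam * t)) atTop (𝓝 0) :=
    tendsto_exp_atBot.comp (tendsto_id.const_mul_atTop_of_neg (neg_lt_zero.2 hlam))
  simpa using (hexp.const_mul C₀).mul_const (⨆ j, ‖f j‖)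

theorem norm_integral_semigroupAct_le (hlam : 0 < lam) (hcent : ∑ j, μ j • f j = 0)
    (herg : M.IsExpErgodic μ C₀ lam) (i : ι) :
    ‖∫ t in Ici 0, M.semigroupAct t f i‖ ≤ C₀ / lam * ⨆ j, ‖f j‖ :=
  calc ‖∫ t in Ici 0, M.semigroupAct t f i‖
      ≤ ∫ t in Ici 0, C₀ * exp (-lam * t) * ⨆ j, ‖f j‖ :=
        norm_integral_le_of_norm_le (integrableOn_exp_decay_Ici hlam _ _)
          (ae_restrict_of_forall_mem measurableSet_Ici fun _ ht =>
            norm_semigroupAct_le hcent herg i ht)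
    _ = C₀ / lam * ⨆ j, ‖f j‖ := by
        rw [integral_Ici_eq_integral_Ioi, integral_mul_const, integral_const_mul,
          integral_exp_mul_Ioi (neg_lt_zero.2 hlam)]
        field_simp
        simp

theorem sum_smul_integral_semigroupAct [CompleteSpace E] (hlam : 0 < lam)
    (hcent : ∑ j, μ j • f j = 0) (herg : M.IsExpErgodic μ C₀ lam) (i : ι) :
    ∑ k, M i k • ∫ t in Ici 0, M.semigroupAct t f k = -f i := by
  have hint k := integrableOn_semigroupAct (M := M) hlam hcent herg k
  calc ∑ k, M i k • ∫ t in Ici 0, M.semigroupAct t f k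
      = ∫ t in Ioi 0, ∑ k, M i k • M.semigroupAct t f k := by
        simp only [integral_Ici_eq_integral_Ioi, ← integral_smul]
        exact (integral_finsetSum _ fun k _ =>
          ((hint k).mono_set Ioi_subset_Ici_self).smul _).symm
    _ = 0 - M.semigroupAct 0 f i :=
        integral_Ioi_of_hasDerivAt_of_tendsto' (fun t _ => M.hasDerivAt_semigroupAct f i t)
          (integrable_finsetSum _ fun k _ => ((hint k).mono_set Ioi_subset_Ici_self).smul _)
          (tendsto_semigroupAct_atTop hlam hcent herg i)
    _ = -f i := by rw [semigroupAct_zero, zero_sub]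

end Ergodic

end Matrix

section PoissonSol

variable {n m : ℕ} (Q : EuclideanSpace ℝ (Fin n) → Matrix (Fin m) (Fin m) ℝ)
  (F : EuclideanSpace ℝ (Fin n) → Fin m → EuclideanSpace ℝ (Fin n)) (x : EuclideanSpace ℝ (Fin n))

theorem poissonSol_apply (i : Fin m) (l : Fin n) :
    poissonSol Q F x i l = ∫ t in Ici 0, (Q x).semigroupAct t (fun j => F x j l) i := by
  simp only [Matrix.semigroupAct_real]
  rfl

theorem poissonSol_eq_integral {i : Fin m}
    (hint : IntegrableOn (fun t => (Q x).semigroupAct t (F x) i) (Ici 0)) :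
    poissonSol Q F x i = ∫ t in Ici 0, (Q x).semigroupAct t (F x) i := by
  ext l
  rw [poissonSol_apply]
  have h := (EuclideanSpace.proj l).integral_comp_comm hint
  simp only [Matrix.map_semigroupAct] at h
  exact h

end PoissonSol

theorem poisson_equation_solution (C₀ lam : ℝ) (hC₀ : 0 < C₀) (hlam : 0 < lam) :
    ∃ C > 0, ∀ (n m : ℕ) (Q : EuclideanSpace ℝ (Fin n) → Matrix (Fin m) (Fin m) ℝ)
      (μ : EuclideanSpace ℝ (Fin n) → Fin m → ℝ)
      (F : EuclideanSpace ℝ (Fin n) → Fin m → EuclideanSpace ℝ (Fin n)),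
      (∀ x i j, i ≠ j → 0 ≤ Q x i j) →
      (∀ x i, ∑ j, Q x i j = 0) →
      (∀ x i, 0 < μ x i) →
      (∀ x, ∑ i, μ x i = 1) →
      (∀ x j, ∑ i, μ x i * Q x i j = 0) →
      (∀ x i (t : ℝ), 0 ≤ t →
        ∑ j, |NormedSpace.exp (t • Q x) i j - μ x j| ≤ C₀ * Real.exp (-lam * t)) →
      -- central condition
      (∀ x, ∑ i, μ x i • F x i = 0) →
      ∀ x : EuclideanSpace ℝ (Fin n),
        -- the integrand is (componentwise) integrable on [0, ∞), so Φ is well defined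
        (∀ (l : Fin n) (i : Fin m),
          IntegrableOn
            (fun t : ℝ => (NormedSpace.exp (t • Q x)).mulVec (fun j => F x j l) i)
            (Set.Ici 0)) ∧
        -- Φ solves the Poisson equation −Q(x)Φ(x,·)(i) = F(x,i) componentwise
        (∀ (i : Fin m) (l : Fin n),
          -((Q x).mulVec (fun j => poissonSol Q F x j l) i) = F x i l) ∧
        -- the bound ‖Φ(x,·)‖_∞ ≤ C ‖F(x,·)‖_∞
        (∀ i : Fin m, ‖poissonSol Q F x i‖ ≤ C * ⨆ j, ‖F x j‖) := by
  refine ⟨C₀ / lam, div_pos hC₀ hlam, fun n m Q μ F _ _ _ _ _ herg hcent x => ?_⟩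
  have hcent_coord (l : Fin n) : ∑ j, μ x j • F x j l = 0 := by
    simpa using congrArg (EuclideanSpace.proj (𝕜 := ℝ) l) (hcent x)
  refine ⟨fun l i => ?_, fun i l => ?_, fun i => ?_⟩
  · simpa only [Matrix.semigroupAct_real] using
      Matrix.integrableOn_semigroupAct hlam (hcent_coord l) (herg x) i
  · simp only [Matrix.mulVec, dotProduct, poissonSol_apply, ← smul_eq_mul]
    rw [Matrix.sum_smul_integral_semigroupAct hlam (hcent_coord l) (herg x) i, neg_neg]
  · rw [poissonSol_eq_integral Q F x (Matrix.integrableOn_semigroupAct hlam (hcent x) (herg x) i)]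
    exact Matrix.norm_integral_semigroupAct_le hlam (hcent x) (herg x) i
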